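/- Under strict preferences, Borda utilities (the k-th ranked of m items has utility m−k+1), and c copies of each item with n agents, any recursively balanced (in particular round-robin) sequential allocation in which each agent picks a most-preferred available item achieves total Borda welfare at least c·m·(m+1)/2, whereas the maximum possible total Borda welfare is at most c·m²; hence the sequential allocation is a 2-approximation to maximum Borda welfare. -/

import Mathlib

open Finset

/-- Sequential allocation with multiple copies of items: on each turn the agent picks a
most-preferred remaining item of which they do not already own a copy. -/
def seqValidM {A O : Type*} [DecidableEq A] [DecidableEq O] (u : A → O → ℝ) :
    List A → List O → Multiset O → (A → Finset O) → Prop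
  | [], [], _, _ => True
  | a :: s, o :: ps, rem, owned =>
      o ∈ rem ∧ o ∉ owned a ∧ (∀ o' ∈ rem, o' ∉ owned a → u a o' ≤ u a o) ∧
      seqValidM u s ps (rem.erase o) (Function.update owned a (insert o (owned a)))
  | _, _, _, _ => False

/-- A sequence of turns is recursively balanced if at every prefix the numbers of turns of
any two agents differ by at most one. -/
def RecBalanced11 {A : Type*} [DecidableEq A] (seq : List A) : Prop :=
  ∀ k : ℕ, ∀ i j : A, (seq.take k).count i ≤ (seq.take k).count j + 1

/-- Total welfare collected along a run. -/
noncomputable def runWelf11 {A O : Type*} (u : A → O → ℝ) (seq : List A) (picks : List O) : ℝ :=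
  ((seq.zip picks).map (fun x => u x.1 x.2)).sum

/-- Welfare of an allocation `f` assigning a set of items to each agent. -/
noncomputable def allocWelf11 {A O : Type*} [Fintype A] (u : A → O → ℝ) (f : A → Finset O) : ℝ :=
  ∑ a, ∑ o ∈ f a, u a o

/-!
The rank of an item for an agent is the number of items the agent strictly prefers to it, and
the Borda utility is `m` minus the rank; so an allocation using all `c * m` copies has welfare
`c * m ^ 2 - R`, with `R` the total rank. Charge `R` to the triples `(a, x, y)` where agent `a`
holds `x` but prefers `y`. For two items `x` and `y`, one of them, say `x`, still has a copy
left whenever a copy of `y` is picked. A greedy agent who picks `y` while preferring `x` must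
then own `x` already, and preferred `x` to `y` when it took `x`. So the agents charged for
`(y, x)` are holders of `x` not charged for `(x, y)`, the charges of the pair total at most `c`,
`2 * R ≤ c * m * (m - 1)`, and the welfare is at least `c * m * (m + 1) / 2`. No allocation
respecting the `c` copies can exceed `c * m * m`.
-/

section Greedy

variable {A O β γ : Type*} [Fintype A] [DecidableEq O] [LinearOrder β] [LinearOrder γ]
  {u : A → O → β} {f : A → Finset O} {τ : A → O → γ}

/-- `τ a x` is the time at which agent `a` took item `x`: every item that `a` prefers to `x` is
held by `a` or has had all of its copies taken before that time. -/
def IsGreedyAlloc (u : A → O → β) (f : A → Finset O) (τ : A → O → γ) : Prop :=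
  ∀ a x, x ∈ f a → ∀ y, u a x < u a y → y ∈ f a ∨ ∀ b, y ∈ f b → τ b y < τ a x

lemma forall_le_exists_or_forall_le_exists (f : A → Finset O) (τ : A → O → γ) (x y : O) :
    (∀ a, y ∈ f a → ∃ b, x ∈ f b ∧ τ a y ≤ τ b x) ∨
      (∀ a, x ∈ f a → ∃ b, y ∈ f b ∧ τ a x ≤ τ b y) := by
  by_contra! h
  obtain ⟨⟨a, hya, ha⟩, ⟨b, hxb, hb⟩⟩ := h
  exact (hb a hya).not_ge (ha b hxb).le

lemma IsGreedyAlloc.card_add_card_le (hf : IsGreedyAlloc u f τ) {x y : O}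
    (hx : ∀ a, y ∈ f a → ∃ b, x ∈ f b ∧ τ a y ≤ τ b x) :
    #{a | y ∈ f a ∧ u a y < u a x} + #{a | x ∈ f a ∧ u a x < u a y} ≤ #{a | x ∈ f a} := by
  have hsub : ({a | y ∈ f a ∧ u a y < u a x} : Finset A) ⊆
      ({a | x ∈ f a ∧ ¬ u a x < u a y} : Finset A) := by
    intro a
    simp only [mem_filter, mem_univ, true_and, not_lt]
    rintro ⟨hya, hlt⟩
    refine ⟨(hf a y hya x hlt).resolve_right fun hexhausted => ?_, hlt.le⟩
    obtain ⟨b, hxb, hle⟩ := hx a hya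
    exact (hexhausted b hxb).not_ge hle
  calc _ ≤ #{a | x ∈ f a ∧ ¬ u a x < u a y} + #{a | x ∈ f a ∧ u a x < u a y} := by
        gcongr
    _ = #{a | x ∈ f a} := by
        rw [add_comm, ← filter_filter, ← filter_filter, card_filter_add_card_filter_not]

lemma IsGreedyAlloc.card_add_card_add_ite_le (hf : IsGreedyAlloc u f τ) {c : ℕ}
    (hcap : ∀ x, #{a | x ∈ f a} ≤ c) (x y : O) :
    #{a | x ∈ f a ∧ u a x < u a y} + #{a | y ∈ f a ∧ u a y < u a x} +
      (if x = y then c else 0) ≤ c := by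
  by_cases hxy : x = y
  · simp [hxy]
  rw [if_neg hxy, add_zero]
  rcases forall_le_exists_or_forall_le_exists f τ x y with h | h
  · exact (add_comm _ _).trans_le ((hf.card_add_card_le h).trans (hcap x))
  · exact (hf.card_add_card_le h).trans (hcap y)

variable [Fintype O]

lemma sum_sum_card_lt_eq_sum_sum_card :
    ∑ a, ∑ x ∈ f a, #{y | u a x < u a y} = ∑ x, ∑ y, #{a | x ∈ f a ∧ u a x < u a y} := by
  calc _ = ∑ a, ∑ x, ∑ y, if x ∈ f a ∧ u a x < u a y then 1 else 0 := by
        simp only [card_eq_sum_ones, sum_filter, ite_and, sum_ite_irrel, sum_const_zero,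
          sum_ite_mem, univ_inter]
    _ = _ := by
        rw [sum_comm]
        simp only [card_eq_sum_ones, sum_filter]
        exact sum_congr rfl fun x _ => sum_comm

theorem IsGreedyAlloc.two_mul_sum_card_lt_add_le (hf : IsGreedyAlloc u f τ) {c : ℕ}
    (hcap : ∀ x, #{a | x ∈ f a} ≤ c) :
    2 * ∑ a, ∑ x ∈ f a, #{y | u a x < u a y} + c * Fintype.card O ≤
      c * Fintype.card O ^ 2 := by
  have hswap : ∑ x, ∑ y, #{a | y ∈ f a ∧ u a y < u a x} =
      ∑ x, ∑ y, #{a | x ∈ f a ∧ u a x < u a y} := sum_comm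
  calc _ = ∑ x, ∑ y, (#{a | x ∈ f a ∧ u a x < u a y} + #{a | y ∈ f a ∧ u a y < u a x} +
        if x = y then c else 0) := by
        simp only [sum_add_distrib, sum_ite_eq, mem_univ, if_true,
          sum_sum_card_lt_eq_sum_sum_card, hswap, sum_const, card_univ, smul_eq_mul]
        ring
    _ ≤ ∑ _x : O, ∑ _y : O, c := by gcongr with x _ y; exact hf.card_add_card_add_ite_le hcap x y
    _ = c * Fintype.card O ^ 2 := by simp [sq]; ring

lemma sum_card_le_of_card_filter_mem_le {c : ℕ} (hcap : ∀ x, #{a | x ∈ f a} ≤ c) :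
    ∑ a, #(f a) ≤ Fintype.card O * c := by
  calc ∑ a, #(f a) = ∑ x, #{a | x ∈ f a} := by
        simp only [card_eq_sum_ones, sum_filter]
        rw [sum_comm]
        simp
    _ ≤ Fintype.card O * c := by simpa using sum_le_card_nsmul univ _ c fun x _ => hcap x

end Greedy

section Borda

variable {A O : Type*} [Fintype O]

lemma allocWelf11_le [Fintype A] [DecidableEq O] {u : A → O → ℝ} {f : A → Finset O} {c : ℕ}
    {B : ℝ} (hB : 0 ≤ B) (hu : ∀ a x, u a x ≤ B) (hcap : ∀ x, #{a | x ∈ f a} ≤ c) :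
    allocWelf11 u f ≤ c * Fintype.card O * B := by
  have hsize : ((∑ a, #(f a) : ℕ) : ℝ) ≤ Fintype.card O * c := by
    exact_mod_cast sum_card_le_of_card_filter_mem_le hcap
  calc allocWelf11 u f ≤ ∑ a, ∑ _x ∈ f a, B := sum_le_sum fun a _ => sum_le_sum fun x _ => hu a x
    _ = ((∑ a, #(f a) : ℕ) : ℝ) * B := by simp [sum_mul]
    _ ≤ c * Fintype.card O * B := by nlinarith

lemma card_lt_eq_of_borda {u : A → O → ℝ} (rnk : A → O ≃ Fin (Fintype.card O))
    (hu : ∀ a o, u a o = (Fintype.card O : ℝ) - (rnk a o : ℕ)) (a : A) (x : O) :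
    #{y | u a x < u a y} = rnk a x := by
  rw [← Fin.card_Iio, ← filter_gt_eq_Iio]
  refine card_equiv (rnk a) fun y => ?_
  simp only [mem_filter, mem_univ, true_and, hu, sub_lt_sub_iff_left, Nat.cast_lt]
  rfl

theorem IsGreedyAlloc.le_allocWelf11 [Fintype A] [DecidableEq O] {γ : Type*} [LinearOrder γ]
    {u : A → O → ℝ} {f : A → Finset O} {τ : A → O → γ} (hf : IsGreedyAlloc u f τ)
    (rnk : A → O ≃ Fin (Fintype.card O))
    (hu : ∀ a o, u a o = (Fintype.card O : ℝ) - (rnk a o : ℕ)) {c : ℕ}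
    (hcap : ∀ x, #{a | x ∈ f a} ≤ c) (hsize : ∑ a, #(f a) = c * Fintype.card O) :
    (c : ℝ) * Fintype.card O * (Fintype.card O + 1) / 2 ≤ allocWelf11 u f := by
  set R := ∑ a, ∑ x ∈ f a, #{y | u a x < u a y}
  have hR : (2 * R + c * Fintype.card O : ℝ) ≤ c * Fintype.card O ^ 2 := by
    exact_mod_cast hf.two_mul_sum_card_lt_add_le hcap
  have hborda : ∀ a x, u a x = Fintype.card O - (#{y | u a x < u a y} : ℝ) := fun a x => by
    rw [card_lt_eq_of_borda rnk hu]
    exact hu a x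
  have hsize' : ∑ a, (#(f a) : ℝ) = c * Fintype.card O := by exact_mod_cast hsize
  have hW : allocWelf11 u f = c * Fintype.card O * Fintype.card O - R := by
    calc allocWelf11 u f = ∑ a, ∑ x ∈ f a, (Fintype.card O - (#{y | u a x < u a y} : ℝ)) :=
          sum_congr rfl fun a _ => sum_congr rfl fun x _ => hborda a x
      _ = _ := by simp [R, sum_sub_distrib, ← sum_mul, hsize']
  rw [hW]
  nlinarith

end Borda

section Turns

variable {A O : Type*} [Fintype O]

def allocOfTurns [DecidableEq A] [DecidableEq O] (t : List (A × O)) (a : A) : Finset O :=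
  {x | (a, x) ∈ t}

lemma List.Nodup.sum_map_eq_sum_allocOfTurns [Fintype A] [DecidableEq A] [DecidableEq O]
    {M : Type*} [AddCommMonoid M] {t : List (A × O)} (ht : t.Nodup) (g : A × O → M) :
    (t.map g).sum = ∑ a, ∑ x ∈ allocOfTurns t a, g (a, x) := by
  rw [← List.sum_toFinset g ht, show t.toFinset = ({p | p ∈ t} : Finset (A × O)) by ext; simp,
    sum_filter, Fintype.sum_prod_type]
  simp [allocOfTurns, sum_filter]

end Turns

namespace seqValidM

variable {A O : Type*} [DecidableEq A] [DecidableEq O] {u : A → O → ℝ} {s : List A} {ps : List O}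
  {rem : Multiset O} {owned : A → Finset O}

@[elab_as_elim]
theorem induction {motive : ∀ s ps rem owned, seqValidM u s ps rem owned → Prop}
    (nil : ∀ rem owned, motive [] [] rem owned trivial)
    (cons : ∀ a s o ps rem owned (hmem : o ∈ rem) (hnot : o ∉ owned a)
      (hbest : ∀ o' ∈ rem, o' ∉ owned a → u a o' ≤ u a o)
      (htail : seqValidM u s ps (rem.erase o) (Function.update owned a (insert o (owned a)))),
      motive _ _ _ _ htail → motive (a :: s) (o :: ps) rem owned ⟨hmem, hnot, hbest, htail⟩)
    (h : seqValidM u s ps rem owned) : motive s ps rem owned h := by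
  induction s generalizing ps rem owned with
  | nil => cases ps with
    | nil => exact nil rem owned
    | cons => exact h.elim
  | cons a s ih => cases ps with
    | nil => exact h.elim
    | cons o ps => exact cons a s o ps rem owned h.1 h.2.1 h.2.2.1 h.2.2.2 (ih h.2.2.2)

lemma length_eq (h : seqValidM u s ps rem owned) : ps.length = s.length := by
  induction h using seqValidM.induction with
  | nil => rfl
  | cons a s o ps rem owned _ _ _ _ ih => simp [ih]

lemma nodup_zip_and_notMem_owned (h : seqValidM u s ps rem owned) :
    (s.zip ps).Nodup ∧ ∀ p ∈ s.zip ps, p.2 ∉ owned p.1 := by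
  induction h using seqValidM.induction with
  | nil => simp
  | cons a s o ps rem owned _ hnot _ _ ih =>
    obtain ⟨hnodup, hfresh⟩ := ih
    have hsub : ∀ b, owned b ⊆ Function.update owned a (insert o (owned a)) b := by
      intro b
      rcases eq_or_ne b a with rfl | hb
      · simp [subset_insert]
      · simp [hb]
    refine ⟨List.nodup_cons.2 ⟨fun hmem => hfresh _ hmem (by simp), hnodup⟩, ?_⟩
    rintro ⟨b, x⟩ hbx
    rcases List.mem_cons.1 hbx with hbx | hbx
    · simp_all
    · exact fun hx => hfresh _ hbx (hsub b hx)

lemma card_filter_mem_zip_le_count [Fintype A] (h : seqValidM u s ps rem owned) (x : O) :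
    #{b | (b, x) ∈ s.zip ps} ≤ rem.count x := by
  induction h using seqValidM.induction with
  | nil => simp
  | cons a s o ps rem owned hmem _ _ _ ih =>
    rcases eq_or_ne o x with rfl | hox
    · have hsub : ({b | (b, o) ∈ (a :: s).zip (o :: ps)} : Finset A) ⊆
          insert a ({b | (b, o) ∈ s.zip ps} : Finset A) := by
        intro b; simp +contextual
      have hpos := Multiset.count_pos.2 hmem
      calc _ ≤ #{b | (b, o) ∈ s.zip ps} + 1 := (card_le_card hsub).trans (card_insert_le _ _)
        _ ≤ rem.count o := by rw [Multiset.count_erase_self] at ih; omega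
    · rw [← Multiset.count_erase_of_ne hox.symm]
      convert ih using 3
      simp [hox.symm]

lemma mem_owned_or_mem_zip_or_idxOf_lt [Fintype A] (h : seqValidM u s ps rem owned) :
    ∀ a x, (a, x) ∈ s.zip ps → ∀ y, u a x < u a y →
      y ∈ owned a ∨ (a, y) ∈ s.zip ps ∨
        ∀ b, (b, y) ∈ s.zip ps → (s.zip ps).idxOf (b, y) < (s.zip ps).idxOf (a, x) := by
  induction h using seqValidM.induction with
  | nil => simp
  | cons a₀ s o ps rem owned hmem hnot hbest htail ih =>
    intro a x hax y hlt
    by_cases hhead : (a, x) = (a₀, o)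
    · obtain ⟨rfl, rfl⟩ := Prod.mk.inj hhead
      refine (em (y ∈ owned a)).imp id fun hown => Or.inr fun b hb => ?_
      have hy : y ∉ rem := fun hy => (hbest y hy hown).not_gt hlt
      have hcard := (show seqValidM u (a :: s) (x :: ps) rem owned from
        ⟨hmem, hnot, hbest, htail⟩).card_filter_mem_zip_le_count y
      rw [Multiset.count_eq_zero.2 hy, Nat.le_zero, card_eq_zero, filter_eq_empty_iff] at hcard
      exact absurd hb (hcard (mem_univ b))
    · have hax' : (a, x) ∈ s.zip ps := (List.mem_cons.1 hax).resolve_left hhead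
      rw [List.zip_cons_cons, List.idxOf_cons_ne _ (Ne.symm hhead)]
      rcases ih a x hax' y hlt with hown | hmem' | hlate
      · rcases eq_or_ne a a₀ with rfl | hne
        · rcases mem_insert.1 (by simpa using hown) with rfl | hown
          · exact Or.inr (Or.inl (by simp))
          · exact Or.inl hown
        · exact Or.inl (by simpa [hne] using hown)
      · exact Or.inr (Or.inl (List.mem_cons_of_mem _ hmem'))
      · refine Or.inr (Or.inr fun b hb => ?_)
        by_cases hbo : (b, y) = (a₀, o)
        · simp [hbo]
        · rw [List.idxOf_cons_ne _ (Ne.symm hbo)]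
          exact Nat.succ_lt_succ (hlate b ((List.mem_cons.1 hb).resolve_left hbo))

variable [Fintype A] [Fintype O]

lemma isGreedyAlloc_allocOfTurns (h : seqValidM u s ps rem fun _ => ∅) :
    IsGreedyAlloc u (allocOfTurns (s.zip ps)) fun a x => (s.zip ps).idxOf (a, x) := by
  intro a x hx y hlt
  simpa [allocOfTurns] using
    h.mem_owned_or_mem_zip_or_idxOf_lt a x (by simpa [allocOfTurns] using hx) y hlt

lemma card_filter_mem_allocOfTurns_le (h : seqValidM u s ps rem owned) (x : O) :
    #{a | x ∈ allocOfTurns (s.zip ps) a} ≤ rem.count x := by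
  simpa [allocOfTurns] using h.card_filter_mem_zip_le_count x

lemma sum_card_allocOfTurns (h : seqValidM u s ps rem owned) :
    ∑ a, #(allocOfTurns (s.zip ps) a) = s.length := by
  have hsum := h.nodup_zip_and_notMem_owned.1.sum_map_eq_sum_allocOfTurns fun _ => (1 : ℕ)
  simp only [List.map_const', List.sum_replicate, smul_eq_mul, mul_one,
    ← card_eq_sum_ones] at hsum
  rw [← hsum, List.length_zip, h.length_eq, min_self]

lemma runWelf11_eq_allocWelf11 (h : seqValidM u s ps rem owned) :
    runWelf11 u s ps = allocWelf11 u (allocOfTurns (s.zip ps)) :=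
  h.nodup_zip_and_notMem_owned.1.sum_map_eq_sum_allocOfTurns _

end seqValidM

theorem stmt11_general {A O : Type*} [Fintype A] [Fintype O] [DecidableEq A] [DecidableEq O]
    (c : ℕ)
    (rnk : A → O ≃ Fin (Fintype.card O))
    (u : A → O → ℝ) (hu : ∀ a o, u a o = (Fintype.card O : ℝ) - (rnk a o : ℕ))
    (seq : List A)
    (hlen : seq.length = c * Fintype.card O)
    (picks : List O)
    (hvalid : seqValidM u seq picks (c • (Finset.univ.val : Multiset O)) (fun _ => ∅)) :
    ((c : ℝ) * Fintype.card O * (Fintype.card O + 1)) / 2 ≤ runWelf11 u seq picks ∧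
    (∀ f : A → Finset O,
      (∀ o : O, (Finset.univ.filter fun a => o ∈ f a).card ≤ c) →
        allocWelf11 u f ≤ (c : ℝ) * (Fintype.card O) ^ 2) ∧
    (∀ f : A → Finset O,
      (∀ o : O, (Finset.univ.filter fun a => o ∈ f a).card ≤ c) →
        allocWelf11 u f ≤ 2 * runWelf11 u seq picks) := by
  set t := seq.zip picks
  have hcap : ∀ x, #{a | x ∈ allocOfTurns t a} ≤ c := fun x => by
    simpa [Multiset.count_nsmul] using hvalid.card_filter_mem_allocOfTurns_le x
  have hlow := hvalid.isGreedyAlloc_allocOfTurns.le_allocWelf11 rnk hu hcap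
    (by rw [hvalid.sum_card_allocOfTurns, hlen])
  rw [← hvalid.runWelf11_eq_allocWelf11] at hlow
  have hup : ∀ f : A → Finset O, (∀ o, #{a | o ∈ f a} ≤ c) →
      allocWelf11 u f ≤ c * Fintype.card O ^ 2 := fun f hf => by
    have hle : ∀ a o, u a o ≤ Fintype.card O := fun a o => by simp [hu]
    simpa [sq, mul_assoc] using allocWelf11_le (Nat.cast_nonneg _) hle hf
  refine ⟨hlow, hup, fun f hf => (hup f hf).trans ?_⟩
  have : (0 : ℝ) ≤ c * Fintype.card O := by positivity
  nlinarith

/-- With strict preferences, Borda utilities (the `k`-th ranked of `m` items has utility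
`m - k + 1`) and `c` copies of each item, any recursively balanced sequential allocation
achieves Borda welfare at least `c·m·(m+1)/2`, while any feasible allocation has welfare at
most `c·m²`; hence the sequential allocation is a 2-approximation of maximum Borda welfare. -/
theorem stmt11 {A O : Type*} [Fintype A] [Fintype O] [DecidableEq A] [DecidableEq O]
    (c : ℕ) (hc : 0 < c)
    (rnk : A → O ≃ Fin (Fintype.card O))
    (u : A → O → ℝ) (hu : ∀ a o, u a o = (Fintype.card O : ℝ) - (rnk a o : ℕ))
    (seq : List A) (hRB : RecBalanced11 seq)
    (hlen : seq.length = c * Fintype.card O)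
    (picks : List O)
    (hvalid : seqValidM u seq picks (c • (Finset.univ.val : Multiset O)) (fun _ => ∅)) :
    ((c : ℝ) * Fintype.card O * (Fintype.card O + 1)) / 2 ≤ runWelf11 u seq picks ∧
    (∀ f : A → Finset O,
      (∀ o : O, (Finset.univ.filter fun a => o ∈ f a).card ≤ c) →
        allocWelf11 u f ≤ (c : ℝ) * (Fintype.card O) ^ 2) ∧
    (∀ f : A → Finset O,
      (∀ o : O, (Finset.univ.filter fun a => o ∈ f a).card ≤ c) →
        allocWelf11 u f ≤ 2 * runWelf11 u seq picks) :=
  stmt11_general c rnk u hu seq hlen picks hvalid
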